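/- Let E_1 and E_2 be two k-dimensional linear subspaces of R^d. Let {u_1,…,u_k} be a basis of E_1 consisting of unit vectors such that for all distinct i,j, ∠(u_i,u_j) ∈ [π/2−φ, π/2+φ] for some φ ∈ [0, arcsin(1/k)). Let θ ∈ [0, arcsin(√(1/k − sin φ))). If ∠(u_i, E_2) ≤ θ for all i, then ∠(E_1, E_2) ≤ arctan( √k·sin θ / √(1 − k·sin²θ − k·sin φ) ). -/

import Mathlib

open Set Real

/-- The angle between two subspaces of `ℝ^d`: the supremum over unit vectors `v ∈ E₁` of
the angle between `v` and its orthogonal projection onto `E₂`. -/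
noncomputable def subAngle {d : ℕ} (V W : Submodule ℝ (EuclideanSpace ℝ (Fin d))) : ℝ :=
  sSup {θ | ∃ v ∈ V, ‖v‖ = 1 ∧
    θ = InnerProductGeometry.angle v
      ((Submodule.orthogonalProjectionOnto W v : W) : EuclideanSpace ℝ (Fin d))}

lemma proj_dist_le {d : ℕ} (E₂ : Submodule ℝ (EuclideanSpace ℝ (Fin d)))
    (x : EuclideanSpace ℝ (Fin d)) (hx : ‖x‖ = 1) (θ : ℝ) (hθ0 : 0 ≤ θ) (hθ : θ < π/2)
    (h : InnerProductGeometry.angle x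
      ((Submodule.orthogonalProjectionOnto E₂ x : E₂) : EuclideanSpace ℝ (Fin d)) ≤ θ) :
    ‖x - ((Submodule.orthogonalProjectionOnto E₂ x : E₂) : EuclideanSpace ℝ (Fin d))‖ ≤ Real.sin θ := by
  set w : EuclideanSpace ℝ (Fin d) := ((Submodule.orthogonalProjectionOnto E₂ x : E₂) : EuclideanSpace ℝ (Fin d)) with hw
  have hiw : (inner ℝ (x - w) w : ℝ) = 0 :=
    Submodule.starProjection_inner_eq_zero x w (Submodule.orthogonalProjectionOnto E₂ x).2
  have hxw : (inner ℝ x w : ℝ) = ‖w‖^2 := by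
    have := inner_sub_left (𝕜 := ℝ) x w w
    rw [hiw] at this
    have h2 : (inner ℝ x w : ℝ) - inner ℝ w w = 0 := this.symm
    rw [real_inner_self_eq_norm_sq] at h2
    linarith
  have hcosθ : 0 < Real.cos θ := Real.cos_pos_of_mem_Ioo ⟨by linarith [Real.pi_pos], hθ⟩
  have hcos : Real.cos θ ≤ Real.cos (InnerProductGeometry.angle x w) :=
    Real.cos_le_cos_of_nonneg_of_le_pi (InnerProductGeometry.angle_nonneg x w)
      (by linarith [Real.pi_pos]) h
  rw [InnerProductGeometry.cos_angle, hxw, hx] at hcos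
  by_cases hw0 : w = 0
  · rw [hw0] at hcos; simp at hcos; linarith
  · have hwn : 0 < ‖w‖ := norm_pos_iff.mpr hw0
    have hwc : Real.cos θ ≤ ‖w‖ := by
      calc Real.cos θ ≤ ‖w‖^2 / (1 * ‖w‖) := hcos
        _ = ‖w‖ := by field_simp [pow_two]
    have hsq : ‖x - w‖^2 ≤ Real.sin θ ^ 2 := by
      have h1 : ‖x - w‖^2 = 1 - ‖w‖^2 := by
        rw [norm_sub_sq_real, hxw, hx]; ring
      rw [h1, Real.sin_sq]
      have : Real.cos θ ^ 2 ≤ ‖w‖^2 := by nlinarith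
      linarith
    have hs0 : 0 ≤ Real.sin θ := Real.sin_nonneg_of_nonneg_of_le_pi hθ0 (by linarith [Real.pi_pos])
    calc ‖x - w‖ = Real.sqrt (‖x - w‖^2) := (Real.sqrt_sq (norm_nonneg _)).symm
      _ ≤ Real.sqrt (Real.sin θ ^ 2) := Real.sqrt_le_sqrt hsq
      _ = Real.sin θ := Real.sqrt_sq hs0


set_option maxHeartbeats 2000000 in
/-- Let `E₁, E₂` be `k`-dimensional subspaces of `ℝ^d`, and `u₁,…,u_k` a basis
of `E₁` of unit vectors whose pairwise angles lie in `[π/2−φ, π/2+φ]` with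
`φ ∈ [0, arcsin(1/k))`.  If `θ ∈ [0, arcsin(√(1/k − sin φ)))` and `∠(uᵢ, E₂) ≤ θ` for all
`i`, then `∠(E₁,E₂) ≤ arctan(√k sin θ / √(1 − k sin²θ − k sin φ))`. -/
theorem stmt4 (d k : ℕ) (hk : 0 < k)
    (E₁ E₂ : Submodule ℝ (EuclideanSpace ℝ (Fin d)))
    (h1 : Module.finrank ℝ E₁ = k) (h2 : Module.finrank ℝ E₂ = k)
    (u : Fin k → EuclideanSpace ℝ (Fin d))
    (hunit : ∀ i, ‖u i‖ = 1) (hli : LinearIndependent ℝ u)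
    (hspan : Submodule.span ℝ (Set.range u) = E₁)
    (φ : ℝ) (hφ0 : 0 ≤ φ) (hφ : φ < Real.arcsin (1 / k))
    (hang : ∀ i j, i ≠ j →
      InnerProductGeometry.angle (u i) (u j) ∈ Set.Icc (π / 2 - φ) (π / 2 + φ))
    (θ : ℝ) (hθ0 : 0 ≤ θ) (hθ : θ < Real.arcsin (Real.sqrt (1 / k - Real.sin φ)))
    (hproj : ∀ i, InnerProductGeometry.angle (u i)
      ((Submodule.orthogonalProjectionOnto E₂ (u i) : E₂) : EuclideanSpace ℝ (Fin d)) ≤ θ) :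
    subAngle E₁ E₂ ≤ Real.arctan (Real.sqrt k * Real.sin θ /
      Real.sqrt (1 - k * Real.sin θ ^ 2 - k * Real.sin φ)) := by
  have hpi := Real.pi_pos
  set s := Real.sin θ with hs
  set p := Real.sin φ with hp
  have hk1 : (1:ℝ) ≤ k := by exact_mod_cast hk
  have hkpos : (0:ℝ) < k := by linarith
  have h1k1 : (1:ℝ)/k ≤ 1 := by rw [div_le_one hkpos]; exact hk1
  have h1k0 : (0:ℝ) < 1/k := by positivity
  have hθπ2 : θ < π/2 := lt_of_lt_of_le hθ (Real.arcsin_le_pi_div_two _)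
  have hφπ2 : φ < π/2 := lt_of_lt_of_le hφ (Real.arcsin_le_pi_div_two _)
  have hs0 : 0 ≤ s := Real.sin_nonneg_of_nonneg_of_le_pi hθ0 (by linarith)
  have hp0 : 0 ≤ p := Real.sin_nonneg_of_nonneg_of_le_pi hφ0 (by linarith)
  -- p < 1/k
  have hpk : p < 1/k := by
    have := Real.strictMonoOn_sin (a := φ) (b := Real.arcsin (1/k))
      ⟨by linarith, by linarith [Real.arcsin_le_pi_div_two (1/(k:ℝ))]⟩
      (Real.arcsin_mem_Icc _) hφ
    rwa [Real.sin_arcsin (by linarith) h1k1] at this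
  have h1kp0 : 0 ≤ 1/k - p := by linarith
  -- s² < 1/k − p
  have hs2 : s^2 < 1/k - p := by
    have hb : Real.sqrt (1/k - p) ≤ 1 := Real.sqrt_le_one.mpr (by linarith)
    have := Real.strictMonoOn_sin (a := θ) (b := Real.arcsin (Real.sqrt (1/k - p)))
      ⟨by linarith, by linarith [Real.arcsin_le_pi_div_two (Real.sqrt (1/(k:ℝ) - p))]⟩
      (Real.arcsin_mem_Icc _) hθ
    rw [Real.sin_arcsin (by linarith [Real.sqrt_nonneg (1/(k:ℝ) - p)]) hb] at this
    exact (Real.lt_sqrt hs0).mp this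
  have hD : 0 < 1 - k*p := by
    have : (k:ℝ) * p < k * (1/k) := by exact mul_lt_mul_of_pos_left hpk hkpos
    rw [mul_one_div_cancel (ne_of_gt hkpos)] at this
    linarith
  have hDen : 0 < 1 - k*s^2 - k*p := by
    have : (k:ℝ) * s^2 < k * (1/k - p) := mul_lt_mul_of_pos_left hs2 hkpos
    have h2 : (k:ℝ) * (1/k - p) = 1 - k*p := by field_simp
    rw [h2] at this; linarith
  -- per-vector projection distance
  have hui : ∀ i, ‖u i - ((Submodule.orthogonalProjectionOnto E₂ (u i) : E₂) : EuclideanSpace ℝ (Fin d))‖ ≤ s :=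
    fun i => proj_dist_le E₂ (u i) (hunit i) θ hθ0 hθπ2 (hproj i)
  -- Gram bound
  have hg : ∀ i j, i ≠ j → |(inner ℝ (u i) (u j) : ℝ)| ≤ p := by
    intro i j hij
    obtain ⟨hlo, hhi⟩ := hang i j hij
    have hc := InnerProductGeometry.cos_angle (u i) (u j)
    rw [hunit i, hunit j] at hc
    have hc' : Real.cos (InnerProductGeometry.angle (u i) (u j)) = inner ℝ (u i) (u j) := by
      rw [hc]; norm_num
    have hA0 := InnerProductGeometry.angle_nonneg (u i) (u j)
    have hAπ := InnerProductGeometry.angle_le_pi (u i) (u j)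
    have hup : Real.cos (InnerProductGeometry.angle (u i) (u j)) ≤ Real.cos (π/2 - φ) :=
      Real.cos_le_cos_of_nonneg_of_le_pi (by linarith) (by linarith) hlo
    have hlow : Real.cos (π/2 + φ) ≤ Real.cos (InnerProductGeometry.angle (u i) (u j)) :=
      Real.cos_le_cos_of_nonneg_of_le_pi hA0 (by linarith) hhi
    rw [Real.cos_pi_div_two_sub] at hup
    have hadd : Real.cos (π/2 + φ) = -p := by
      rw [Real.cos_add, Real.cos_pi_div_two, Real.sin_pi_div_two]; ring
    rw [hadd] at hlow
    rw [hc'] at hup hlow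
    exact abs_le.mpr ⟨hlow, hup⟩
  -- main sSup bound
  rw [subAngle]
  apply Real.sSup_le
  · rintro x ⟨v, hvE, hv1, rfl⟩
    obtain ⟨c, hc⟩ := (Submodule.mem_span_range_iff_exists_fun ℝ).mp (by rw [hspan]; exact hvE)
    set C := ∑ i, (c i)^2 with hC
    set A := ∑ i, |c i| with hA
    have hA0 : 0 ≤ A := Finset.sum_nonneg (fun i _ => abs_nonneg _)
    have hC0 : 0 ≤ C := Finset.sum_nonneg (fun i _ => sq_nonneg _)
    have hA2 : A^2 ≤ k * C := by
      have := sq_sum_le_card_mul_sum_sq (s := Finset.univ) (f := fun i => |c i|)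
      simpa [sq_abs, Finset.card_univ] using this
    -- ∑∑ = 1
    have hvv : ∑ i, ∑ j, c i * c j * (inner ℝ (u i) (u j) : ℝ) = 1 := by
      have h0 : (inner ℝ v v : ℝ) = 1 := by
        rw [real_inner_self_eq_norm_sq, hv1]; norm_num
      rw [← hc] at h0
      rw [sum_inner] at h0
      calc ∑ i, ∑ j, c i * c j * (inner ℝ (u i) (u j) : ℝ)
          = ∑ i, (inner ℝ (c i • u i) (∑ j, c j • u j) : ℝ) := by
            refine Finset.sum_congr rfl (fun i _ => ?_)
            rw [inner_sum]
            refine Finset.sum_congr rfl (fun j _ => ?_)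
            rw [real_inner_smul_left, real_inner_smul_right]; ring
        _ = 1 := h0
    -- C(1-kp) ≤ 1
    have hCb : C * (1 - k*p) ≤ 1 := by
      have hsplit : ∀ i : Fin k, ∑ j, c i * c j * (inner ℝ (u i) (u j) : ℝ)
          = (c i)^2 + ∑ j ∈ Finset.univ.erase i, c i * c j * (inner ℝ (u i) (u j) : ℝ) := by
        intro i
        rw [← Finset.add_sum_erase _ _ (Finset.mem_univ i)]
        congr 1
        rw [real_inner_self_eq_norm_sq, hunit i]; ring
      have hsum : C + ∑ i, ∑ j ∈ Finset.univ.erase i, c i * c j * (inner ℝ (u i) (u j) : ℝ) = 1 := by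
        rw [← hvv, hC, ← Finset.sum_add_distrib]
        exact Finset.sum_congr rfl (fun i _ => (hsplit i).symm)
      have herase : ∀ i : Fin k, ∑ j ∈ Finset.univ.erase i, |c j| = A - |c i| := by
        intro i
        have := Finset.add_sum_erase Finset.univ (fun j => |c j|) (Finset.mem_univ i)
        rw [hA]; linarith [this]
      have hoffb : |∑ i, ∑ j ∈ Finset.univ.erase i, c i * c j * (inner ℝ (u i) (u j) : ℝ)|
          ≤ p * (A^2 - C) := by
        calc |∑ i, ∑ j ∈ Finset.univ.erase i, c i * c j * (inner ℝ (u i) (u j) : ℝ)|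
            ≤ ∑ i, |∑ j ∈ Finset.univ.erase i, c i * c j * (inner ℝ (u i) (u j) : ℝ)| :=
              Finset.abs_sum_le_sum_abs _ _
          _ ≤ ∑ i, ∑ j ∈ Finset.univ.erase i, |c i * c j * (inner ℝ (u i) (u j) : ℝ)| :=
              Finset.sum_le_sum (fun i _ => Finset.abs_sum_le_sum_abs _ _)
          _ ≤ ∑ i, ∑ j ∈ Finset.univ.erase i, |c i| * |c j| * p := by
              refine Finset.sum_le_sum (fun i _ => Finset.sum_le_sum (fun j hj => ?_))
              rw [abs_mul, abs_mul]
              have hij : i ≠ j := fun h => (Finset.mem_erase.mp hj).1 h.symm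
              exact mul_le_mul_of_nonneg_left (hg i j hij)
                (by positivity)
          _ = ∑ i, |c i| * (A - |c i|) * p := by
              refine Finset.sum_congr rfl (fun i _ => ?_)
              rw [← herase i, Finset.mul_sum, Finset.sum_mul]
          _ = (A^2 - C) * p := by
              rw [← Finset.sum_mul]
              congr 1
              have hx : ∀ i : Fin k, |c i| * (A - |c i|) = |c i| * A - (c i)^2 :=
                fun i => by rw [mul_sub, ← sq_abs (c i)]; ring
              rw [Finset.sum_congr rfl (fun i _ => hx i), Finset.sum_sub_distrib,
                ← Finset.sum_mul, ← hA, ← hC]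
              ring
          _ = p * (A^2 - C) := by ring
      have h1 : C ≤ 1 + p * (A^2 - C) := by
        have := abs_le.mp hoffb
        linarith [this.1]
      nlinarith [h1, hA2, hp0, hC0]
    -- the projection of v
    set w : EuclideanSpace ℝ (Fin d) := ((Submodule.orthogonalProjectionOnto E₂ v : E₂) : EuclideanSpace ℝ (Fin d)) with hw
    have hPv : w = ∑ i, c i • ((Submodule.orthogonalProjectionOnto E₂ (u i) : E₂) : EuclideanSpace ℝ (Fin d)) := by
      rw [hw, ← hc, map_sum]
      push_cast
      refine Finset.sum_congr rfl (fun i _ => ?_)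
      rw [map_smul]
      norm_cast
    set r := ‖v - w‖ with hr
    have hrA : r ≤ s * A := by
      have hvw : v - w = ∑ i, c i • (u i - ((Submodule.orthogonalProjectionOnto E₂ (u i) : E₂) : EuclideanSpace ℝ (Fin d))) := by
        rw [hPv, ← hc, ← Finset.sum_sub_distrib]
        refine Finset.sum_congr rfl (fun i _ => ?_)
        rw [smul_sub]
      rw [hr, hvw]
      calc ‖∑ i, c i • (u i - ((Submodule.orthogonalProjectionOnto E₂ (u i) : E₂) : EuclideanSpace ℝ (Fin d)))‖
          ≤ ∑ i, ‖c i • (u i - ((Submodule.orthogonalProjectionOnto E₂ (u i) : E₂) : EuclideanSpace ℝ (Fin d)))‖ :=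
            norm_sum_le _ _
        _ ≤ ∑ i, |c i| * s := by
            refine Finset.sum_le_sum (fun i _ => ?_)
            rw [norm_smul, Real.norm_eq_abs]
            exact mul_le_mul_of_nonneg_left (hui i) (abs_nonneg _)
        _ = s * A := by rw [hA, Finset.mul_sum]; exact Finset.sum_congr rfl (fun i _ => by ring)
    have hr0 : 0 ≤ r := norm_nonneg _
    have hr2 : r^2 * (1 - k*p) ≤ k * s^2 := by
      have h1 : r^2 ≤ s^2 * A^2 := by nlinarith
      have h2 : r^2 * (1 - k*p) ≤ (s^2 * (k*C)) * (1 - k*p) :=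
        mul_le_mul_of_nonneg_right
          (h1.trans (mul_le_mul_of_nonneg_left hA2 (sq_nonneg s))) hD.le
      have h4 : (s^2*k) * (C*(1-k*p)) ≤ (s^2*k) * 1 :=
        mul_le_mul_of_nonneg_left hCb (by positivity)
      calc r^2 * (1 - k*p) ≤ (s^2 * (k*C)) * (1 - k*p) := h2
        _ = (s^2*k) * (C*(1-k*p)) := by ring
        _ ≤ (s^2*k) * 1 := h4
        _ = k * s^2 := by ring
    have hr1 : r^2 < 1 := by nlinarith [hDen]
    -- inner ℝ v w = ‖w‖²
    have hiw : (inner ℝ (v - w) w : ℝ) = 0 :=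
      Submodule.starProjection_inner_eq_zero v w (Submodule.orthogonalProjectionOnto E₂ v).2
    have hxw : (inner ℝ v w : ℝ) = ‖w‖^2 := by
      have := inner_sub_left (𝕜 := ℝ) v w w
      rw [hiw] at this
      have h2 : (inner ℝ v w : ℝ) - inner ℝ w w = 0 := this.symm
      rw [real_inner_self_eq_norm_sq] at h2
      linarith
    have hw2 : ‖w‖^2 = 1 - r^2 := by
      have := norm_sub_sq_real v w
      rw [hxw, hv1] at this
      rw [← hr] at this
      nlinarith [this]
    have hwpos : 0 < ‖w‖ := by
      have h5 : 0 < ‖w‖^2 := by rw [hw2]; linarith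
      nlinarith [norm_nonneg w]
    -- angle = arctan (r / ‖w‖)
    have hangle : InnerProductGeometry.angle v w = Real.arctan (r / ‖w‖) := by
      rw [InnerProductGeometry.angle, hxw, hv1]
      have h3 : ‖w‖^2 / (1 * ‖w‖) = ‖w‖ := by field_simp [pow_two]
      rw [h3, Real.arccos_eq_arctan hwpos]
      congr 1
      rw [hw2]
      congr 1
      rw [show (1:ℝ) - (1 - r^2) = r^2 by ring, Real.sqrt_sq hr0]
    rw [hangle]
    apply Real.arctan_strictMono.monotone
    have hwn : ‖w‖ = Real.sqrt (1 - r^2) := by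
      rw [← hw2, Real.sqrt_sq (le_of_lt hwpos)]
    have h1r0 : (0:ℝ) ≤ 1 - r^2 := by linarith
    rw [hwn, div_le_div_iff₀ (by rw [← hwn]; exact hwpos) (Real.sqrt_pos.mpr hDen)]
    have hsq : (r * Real.sqrt (1 - k*s^2 - k*p))^2 ≤ (Real.sqrt k * s * Real.sqrt (1 - r^2))^2 := by
      rw [mul_pow, mul_pow, mul_pow, Real.sq_sqrt hDen.le, Real.sq_sqrt h1r0,
        Real.sq_sqrt hkpos.le]
      nlinarith [hr2]
    calc r * Real.sqrt (1 - k*s^2 - k*p)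
        = Real.sqrt ((r * Real.sqrt (1 - k*s^2 - k*p))^2) := by
          rw [Real.sqrt_sq (by positivity)]
      _ ≤ Real.sqrt ((Real.sqrt k * s * Real.sqrt (1 - r^2))^2) := Real.sqrt_le_sqrt hsq
      _ = Real.sqrt k * s * Real.sqrt (1 - r^2) := by
          rw [Real.sqrt_sq (by positivity)]
  · rw [← Real.arctan_zero]
    apply Real.arctan_strictMono.monotone
    apply div_nonneg _ (Real.sqrt_nonneg _)
    exact mul_nonneg (Real.sqrt_nonneg _) hs0
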